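/- arXiv:0709.2340 — 6 statements merged into one kernel-verified Lean document; each statement's English description precedes it below -/
import Mathlib

section
/- Let {W_i}_{i=1}^N be a fusion frame for ℝ^M with bounds 0 < A ≤ B and projections P_1,…,P_N, let σ_n > 0, and let R be a positive definite M×M real matrix with eigenvalues 0 < λ_1 ≤ λ_2 ≤ … ≤ λ_M (with multiplicity). Then Σ_{i=1}^M 1/(1/λ_i + B/σ_n²) ≤ tr[(R^{-1} + σ_n^{-2} Σ_{j=1}^N P_j)^{-1}] ≤ Σ_{i=1}^M 1/(1/λ_i + A/σ_n²). -/
/-!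
Write `S = R⁻¹ + σₙ⁻² ∑ Pⱼ`. The frame bounds `A • 1 ≤ ∑ Pⱼ ≤ B • 1` give, in the Loewner order,
`R⁻¹ + (A/σₙ²) • 1 ≤ S ≤ R⁻¹ + (B/σₙ²) • 1`. Inversion is order-reversing on positive definite
matrices and the trace is monotone, so `tr S⁻¹` lies between the traces of the inverses of the two
outer matrices. These commute with `R`, so diagonalizing `R` computes their traces as
`∑ᵢ 1/(1/λᵢ + c)`.
-/

open Matrix BigOperators

open scoped MatrixOrder ComplexOrder

namespace Matrix

variable {n : Type*}

section Loewner

variable {𝕜 : Type*} [RCLike 𝕜] {X Y : Matrix n n 𝕜}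

lemma PosDef.of_le (hX : X.PosDef) (h : X ≤ Y) : Y.PosDef := by
  simpa using hX.add_posSemidef h

lemma PosDef.inv_le_inv [Fintype n] [DecidableEq n] (hX : X.PosDef) (h : X ≤ Y) :
    Y⁻¹ ≤ X⁻¹ := by
  have hY := hX.of_le h
  have := hX.isUnit.invertible
  have := hY.isUnit.invertible
  have hD : (Y - X).PosSemidef := h
  have key : X⁻¹ - Y⁻¹ = (Y⁻¹)ᴴ * ((Y - X) + (Y - X)ᴴ * X⁻¹ * (Y - X)) * Y⁻¹ := by
    rw [hD.1.eq, hY.inv.isHermitian.eq]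
    simp only [Matrix.mul_add, Matrix.add_mul, Matrix.mul_sub, Matrix.sub_mul, Matrix.mul_assoc,
      inv_mul_of_invertible, mul_inv_of_invertible, inv_mul_cancel_left_of_invertible,
      Matrix.mul_one, Matrix.one_mul]
    noncomm_ring
  rw [le_iff, key]
  exact (hD.add (hX.inv.posSemidef.conjTranspose_mul_mul_same _)).conjTranspose_mul_mul_same _

end Loewner

lemma trace_mono [Fintype n] {X Y : Matrix n n ℝ} (h : X ≤ Y) : X.trace ≤ Y.trace :=
  (tracePositiveLinearMap n ℝ ℝ).monotone' h

variable [Fintype n] [DecidableEq n]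

section Conjugation

variable {α : Type*} [CommRing α] [StarRing α]

lemma inv_conjStarAlgAut (u : unitary (Matrix n n α)) (X : Matrix n n α) :
    (Unitary.conjStarAlgAut α _ u X)⁻¹ = Unitary.conjStarAlgAut α _ u X⁻¹ := by
  have hu : (u : Matrix n n α)⁻¹ = star u := inv_eq_left_inv (Unitary.coe_star_mul_self u)
  have hsu : (star u : Matrix n n α)⁻¹ = u := inv_eq_left_inv (Unitary.coe_mul_star_self u)
  simp only [Unitary.conjStarAlgAut_apply, mul_inv_rev, hu, hsu, Unitary.coe_star,
    Matrix.mul_assoc]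

lemma trace_conjStarAlgAut (u : unitary (Matrix n n α)) (X : Matrix n n α) :
    (Unitary.conjStarAlgAut α _ u X).trace = X.trace := by
  rw [Unitary.conjStarAlgAut_apply, trace_mul_cycle, Unitary.coe_star_mul_self, Matrix.one_mul]

end Conjugation

lemma inv_diagonal_of_ne_zero {K : Type*} [Field K] {v : n → K} (hv : ∀ i, v i ≠ 0) :
    (diagonal v)⁻¹ = diagonal v⁻¹ :=
  inv_eq_left_inv <| by
    rw [diagonal_mul_diagonal, ← diagonal_one]
    exact congrArg diagonal (funext fun i => inv_mul_cancel₀ (hv i))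

lemma PosDef.trace_inv_add_smul_one {R : Matrix n n ℝ} (hR : R.PosDef) {c : ℝ} (hc : 0 ≤ c) :
    ((R⁻¹ + c • 1)⁻¹).trace = ∑ i, 1 / (1 / hR.1.eigenvalues i + c) := by
  have hR' := hR.1.spectral_theorem
  have hpos := hR.eigenvalues_pos
  set φ := Unitary.conjStarAlgAut ℝ (Matrix n n ℝ) hR.1.eigenvectorUnitary
  set d := hR.1.eigenvalues
  rw [RCLike.ofReal_real_eq_id, Function.id_comp] at hR'
  have hdiag : R⁻¹ + c • 1 = φ (diagonal fun i => (d i)⁻¹ + c) := by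
    rw [hR', inv_conjStarAlgAut, inv_diagonal_of_ne_zero fun i => (hpos i).ne', ← map_one φ,
      ← map_smul, ← map_add, smul_one_eq_diagonal, diagonal_add]
    rfl
  rw [hdiag, inv_conjStarAlgAut, trace_conjStarAlgAut,
    inv_diagonal_of_ne_zero fun i => (add_pos_of_pos_of_nonneg (inv_pos.2 (hpos i)) hc).ne',
    trace_diagonal]
  simp only [Pi.inv_apply, one_div]

end Matrix

theorem lmmse_mse_bounds_general {M N : ℕ} (A B : ℝ) (hA : 0 < A) (hAB : A ≤ B)
    (P : Fin N → Matrix (Fin M) (Fin M) ℝ)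
    (hframe : ((∑ i, P i) - A • (1 : Matrix (Fin M) (Fin M) ℝ)).PosSemidef ∧
      (B • (1 : Matrix (Fin M) (Fin M) ℝ) - ∑ i, P i).PosSemidef)
    (σn : ℝ)
    (R : Matrix (Fin M) (Fin M) ℝ) (hR : R.PosDef) :
    (∑ i, 1 / (1 / hR.1.eigenvalues i + B / σn ^ 2)) ≤
        Matrix.trace ((R⁻¹ + (σn ^ 2)⁻¹ • ∑ j, P j)⁻¹) ∧
      Matrix.trace ((R⁻¹ + (σn ^ 2)⁻¹ • ∑ j, P j)⁻¹) ≤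
        ∑ i, 1 / (1 / hR.1.eigenvalues i + A / σn ^ 2) := by
  have hB : 0 ≤ B := hA.le.trans hAB
  have hscale (c : ℝ) : R⁻¹ + (c / σn ^ 2) • 1 = R⁻¹ + (σn ^ 2)⁻¹ • c • 1 := by
    rw [smul_smul, inv_mul_eq_div]
  have hlow : R⁻¹ + (A / σn ^ 2) • 1 ≤ R⁻¹ + (σn ^ 2)⁻¹ • ∑ j, P j := by
    rw [hscale]
    gcongr
    exact hframe.1
  have hupp : R⁻¹ + (σn ^ 2)⁻¹ • ∑ j, P j ≤ R⁻¹ + (B / σn ^ 2) • 1 := by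
    rw [hscale]
    gcongr
    exact hframe.2
  have hApd : (R⁻¹ + (A / σn ^ 2) • 1).PosDef :=
    hR.inv.add_posSemidef (PosSemidef.one.smul (by positivity))
  rw [← hR.trace_inv_add_smul_one (c := A / σn ^ 2) (by positivity),
    ← hR.trace_inv_add_smul_one (c := B / σn ^ 2) (by positivity)]
  exact ⟨trace_mono ((hApd.of_le hlow).inv_le_inv hupp), trace_mono (hApd.inv_le_inv hlow)⟩

/-- For a fusion frame `{W i}` for `ℝ^M` with bounds `0 < A ≤ B`,
noise level `σₙ > 0`, and a positive definite signal covariance `R` with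
eigenvalues `λ i` (with multiplicity), the MSE of the LMMSE estimator satisfies
`∑ᵢ 1/(1/λᵢ + B/σₙ²) ≤ tr[(R⁻¹ + σₙ⁻² ∑ⱼ Pⱼ)⁻¹] ≤ ∑ᵢ 1/(1/λᵢ + A/σₙ²)`. -/
theorem lmmse_mse_bounds {M N : ℕ} (A B : ℝ) (hA : 0 < A) (hAB : A ≤ B)
    (W : Fin N → Submodule ℝ (Fin M → ℝ))
    (P : Fin N → Matrix (Fin M) (Fin M) ℝ)
    (hP : ∀ i, (P i).IsSymm ∧ P i * P i = P i ∧
      LinearMap.range (P i).mulVecLin = W i)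
    (hframe : ((∑ i, P i) - A • (1 : Matrix (Fin M) (Fin M) ℝ)).PosSemidef ∧
      (B • (1 : Matrix (Fin M) (Fin M) ℝ) - ∑ i, P i).PosSemidef)
    (σn : ℝ) (hσn : 0 < σn)
    (R : Matrix (Fin M) (Fin M) ℝ) (hR : R.PosDef) :
    (∑ i, 1 / (1 / hR.1.eigenvalues i + B / σn ^ 2)) ≤
        Matrix.trace ((R⁻¹ + (σn ^ 2)⁻¹ • ∑ j, P j)⁻¹) ∧
      Matrix.trace ((R⁻¹ + (σn ^ 2)⁻¹ • ∑ j, P j)⁻¹) ≤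
        ∑ i, 1 / (1 / hR.1.eigenvalues i + A / σn ^ 2) :=
  lmmse_mse_bounds_general A B hA hAB P hframe σn R hR
end

section
/- Let σ_x, σ_n > 0 and let W_1,…,W_N be subspaces of ℝ^M with orthogonal projections P_1,…,P_N that form a fusion frame (i.e. Σ_{i=1}^N P_i is positive definite), and set D = Σ_{i=1}^N dim W_i. Then tr[(σ_x^{-2} I + σ_n^{-2} Σ_{i=1}^N P_i)^{-1}] ≥ M σ_x² σ_n² / (σ_n² + σ_x² D/M), with equality if and only if the fusion frame is tight, i.e. Σ_{i=1}^N P_i = (D/M)·I. Hence, for signal covariance σ_x² I and fixed total subspace dimension, the MSE of the LMMSE estimator is minimized exactly by tight fusion frames. -/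
/-!
With `A = σₓ⁻² I + σₙ⁻² ∑ᵢ Pᵢ` and `c = tr A / M`, the identity
`(A - c I) A⁻¹ (A - c I) = c² A⁻¹ - 2c I + A` gives
`c² (tr A⁻¹ - M² / tr A) = tr ((A - c I) A⁻¹ (A - c I)) ≥ 0`, with equality iff `A = c I`,
since `A⁻¹` is positive definite. As `tr Pᵢ = dim Wᵢ`, `tr A = M σₓ⁻² + σₙ⁻² D`, so `M² / tr A`
is the claimed bound, and `A` is scalar exactly when `∑ᵢ Pᵢ = (D/M) I`.
-/

open Matrix BigOperators

theorem smul_add_smul_eq_add_mul_smul_iff {R M : Type*} [Ring R] [IsCancelMulZero R]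
    [AddCommGroup M] [Module R M] [Module.IsTorsionFree R M] {a b t : R} (hb : b ≠ 0) (x y : M) :
    a • x + b • y = (a + b * t) • x ↔ y = t • x := by
  rw [add_smul, mul_smul, add_right_inj, smul_right_inj hb]

namespace Matrix

variable {n : Type*} [Fintype n]

theorem trace_eq_finrank_range_of_isIdempotentElem [DecidableEq n] {K : Type*} [Field K]
    {P : Matrix n n K} (hP : IsIdempotentElem P) :
    P.trace = Module.finrank K (LinearMap.range P.mulVecLin) := by
  have hidem : IsIdempotentElem P.mulVecLin := by
    rw [← toLin'_apply', IsIdempotentElem, Module.End.mul_eq_comp, ← toLin'_mul, hP.eq]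
  rw [← trace_toLin'_eq, toLin'_apply', (LinearMap.IsIdempotentElem.isProj_range _ hidem).trace]

theorem PosDef.eq_zero_of_conjTranspose_mul_mul_same_eq_zero {m R : Type*} [Fintype m]
    [Ring R] [PartialOrder R] [StarRing R] {A : Matrix n n R} {B : Matrix n m R}
    (hA : A.PosDef) (h : Bᴴ * A * B = 0) : B = 0 := by
  refine ext_iff_mulVec.2 fun v => ?_
  by_contra hv
  rw [zero_mulVec] at hv
  have := hA.dotProduct_mulVec_pos hv
  simp only [star_mulVec, dotProduct_mulVec, vecMul_vecMul, h, vecMul_zero,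
    zero_dotProduct] at this
  exact lt_irrefl _ this

theorem sub_smul_one_mul_inv_mul_sub_smul_one [DecidableEq n] {R : Type*} [CommRing R]
    {A : Matrix n n R} (hA : IsUnit A) (c : R) :
    (A - c • 1) * A⁻¹ * (A - c • 1) = c ^ 2 • A⁻¹ - (2 * c) • 1 + A := by
  have hdet := (isUnit_iff_isUnit_det A).mp hA
  simp only [Matrix.sub_mul, Matrix.mul_sub, Matrix.smul_mul, Matrix.mul_smul, Matrix.one_mul,
    Matrix.mul_one, mul_nonsing_inv A hdet, nonsing_inv_mul A hdet]
  module

variable [DecidableEq n] {A : Matrix n n ℝ}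

theorem PosDef.trace_inv_sub_sq_card_div_trace [Nonempty n] (hA : A.PosDef) :
    A⁻¹.trace - (Fintype.card n : ℝ) ^ 2 / A.trace =
      ((A - (A.trace / Fintype.card n) • 1) * A⁻¹ * (A - (A.trace / Fintype.card n) • 1)).trace /
        (A.trace / Fintype.card n) ^ 2 := by
  have htr := hA.trace_pos
  have hcard : (0 : ℝ) < Fintype.card n := Nat.cast_pos.mpr Fintype.card_pos
  rw [sub_smul_one_mul_inv_mul_sub_smul_one hA.isUnit, trace_add, trace_sub, trace_smul,
    trace_smul, trace_one, smul_eq_mul, smul_eq_mul]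
  field_simp
  ring

theorem PosDef.posSemidef_mul_inv_mul (hA : A.PosDef) {B : Matrix n n ℝ} (hB : B.IsHermitian) :
    (B * A⁻¹ * B).PosSemidef := by
  simpa only [hB.eq] using hA.inv.posSemidef.conjTranspose_mul_mul_same B

theorem PosDef.mul_inv_mul_eq_zero_iff (hA : A.PosDef) {B : Matrix n n ℝ} (hB : B.IsHermitian) :
    B * A⁻¹ * B = 0 ↔ B = 0 := by
  refine ⟨fun h => hA.inv.eq_zero_of_conjTranspose_mul_mul_same_eq_zero ?_, fun h => by simp [h]⟩
  rwa [hB.eq]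

theorem PosDef.sq_card_div_trace_le_trace_inv [Nonempty n] (hA : A.PosDef) :
    (Fintype.card n : ℝ) ^ 2 / A.trace ≤ A⁻¹.trace := by
  have hB : (A - (A.trace / Fintype.card n) • 1).IsHermitian :=
    hA.1.sub (isHermitian_one.smul (.all _))
  rw [← sub_nonneg, hA.trace_inv_sub_sq_card_div_trace]
  exact div_nonneg (hA.posSemidef_mul_inv_mul hB).trace_nonneg (sq_nonneg _)

theorem PosDef.trace_inv_eq_sq_card_div_trace_iff [Nonempty n] (hA : A.PosDef) :
    A⁻¹.trace = (Fintype.card n : ℝ) ^ 2 / A.trace ↔ A = (A.trace / Fintype.card n) • 1 := by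
  have hB : (A - (A.trace / Fintype.card n) • 1).IsHermitian :=
    hA.1.sub (isHermitian_one.smul (.all _))
  have hc : A.trace / Fintype.card n ≠ 0 :=
    (div_pos hA.trace_pos (Nat.cast_pos.mpr Fintype.card_pos)).ne'
  rw [← sub_eq_zero, hA.trace_inv_sub_sq_card_div_trace, div_eq_zero_iff,
    or_iff_left (pow_ne_zero 2 hc), (hA.posSemidef_mul_inv_mul hB).trace_eq_zero_iff,
    hA.mul_inv_mul_eq_zero_iff hB, sub_eq_zero]

end Matrix

/-- Let `σₓ, σₙ > 0` and let `W 1, …, W N` be subspaces of `ℝ^M` with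
orthogonal projections `P 1, …, P N` forming a fusion frame (`∑ᵢ Pᵢ` positive definite),
and set `D = ∑ᵢ dim W i`.  Then
`tr[(σₓ⁻² I + σₙ⁻² ∑ᵢ Pᵢ)⁻¹] ≥ M σₓ² σₙ² / (σₙ² + σₓ² D/M)`,
with equality if and only if the fusion frame is tight, i.e. `∑ᵢ Pᵢ = (D/M) • I`. -/
theorem lmmse_mse_min_iff_tight {M N : ℕ} (hM : 0 < M)
    (σx σn : ℝ) (hσx : 0 < σx) (hσn : 0 < σn)
    (W : Fin N → Submodule ℝ (Fin M → ℝ))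
    (P : Fin N → Matrix (Fin M) (Fin M) ℝ)
    (hP : ∀ i, (P i).IsSymm ∧ P i * P i = P i ∧
      LinearMap.range (P i).mulVecLin = W i)
    (hff : (∑ i, P i).PosDef)
    (D : ℕ) (hD : D = ∑ i, Module.finrank ℝ (W i)) :
    (M : ℝ) * σx ^ 2 * σn ^ 2 / (σn ^ 2 + σx ^ 2 * D / M) ≤
        Matrix.trace (((σx ^ 2)⁻¹ • (1 : Matrix (Fin M) (Fin M) ℝ) +
          (σn ^ 2)⁻¹ • ∑ i, P i)⁻¹) ∧
      (Matrix.trace (((σx ^ 2)⁻¹ • (1 : Matrix (Fin M) (Fin M) ℝ) +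
          (σn ^ 2)⁻¹ • ∑ i, P i)⁻¹) =
          (M : ℝ) * σx ^ 2 * σn ^ 2 / (σn ^ 2 + σx ^ 2 * D / M) ↔
        ∑ i, P i = ((D : ℝ) / (M : ℝ)) • (1 : Matrix (Fin M) (Fin M) ℝ)) := by
  set S := ∑ i, P i
  set A : Matrix (Fin M) (Fin M) ℝ := (σx ^ 2)⁻¹ • 1 + (σn ^ 2)⁻¹ • S with hA
  have : Nonempty (Fin M) := Fin.pos_iff_nonempty.mp hM
  have hApd : A.PosDef := (PosDef.one.smul (by positivity)).add (hff.smul (by positivity))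
  have htrS : S.trace = D := by
    rw [trace_sum, hD]
    push_cast
    exact Finset.sum_congr rfl fun i _ =>
      (hP i).2.2 ▸ trace_eq_finrank_range_of_isIdempotentElem (hP i).2.1
  have htrA : A.trace = M * (σx ^ 2)⁻¹ + (σn ^ 2)⁻¹ * D := by
    simp [hA, trace_add, trace_smul, htrS, mul_comm]
  have hbound : (M : ℝ) * σx ^ 2 * σn ^ 2 / (σn ^ 2 + σx ^ 2 * D / M) = M ^ 2 / A.trace := by
    rw [htrA]
    field_simp
  have hscalar : A.trace / M = (σx ^ 2)⁻¹ + (σn ^ 2)⁻¹ * (D / M) := by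
    rw [htrA]
    field_simp
  rw [hbound]
  refine ⟨by simpa only [Fintype.card_fin] using hApd.sq_card_div_trace_le_trace_inv, ?_⟩
  have hiff := hApd.trace_inv_eq_sq_card_div_trace_iff
  rwa [Fintype.card_fin, hscalar, hA, smul_add_smul_eq_add_mul_smul_iff (by positivity)] at hiff
end

section
/- Let {W_i}_{i=1}^N be a tight fusion frame for ℝ^M with Σ_{i=1}^N P_i = A·I, let σ_x, σ_n > 0, let P be the NM×M composite matrix stacking P_1,…,P_N, let S ⊆ {1,…,N}, and let E be the NM×NM block-diagonal matrix whose i-th M×M diagonal block is I if i ∈ S and 0 otherwise. Then tr[σ_x⁴ P^T (σ_x² P P^T + σ_n² I)^{-1} E (σ_x² P P^T + σ_n² I) E (σ_x² P P^T + σ_n² I)^{-1} P] = α² · tr[σ_x² (Σ_{i∈S} P_i)² + σ_n² Σ_{i∈S} P_i], where α = σ_x²/(A σ_x² + σ_n²). -/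
open Matrix

/-!
Let `G = σx² Pc Pcᵀ + σn² I` and `c = A σx² + σn²`. Tightness says `Pcᵀ Pc = A I`, so
`G Pc = c Pc`, hence `G⁻¹ Pc = c⁻¹ Pc` and `Pcᵀ G⁻¹ = c⁻¹ Pcᵀ`; the extra MSE collapses to
`σx⁴ c⁻² tr[Pcᵀ E G E Pc] = α² tr[Pcᵀ E G E Pc]`. As `E` is an idempotent diagonal projection
onto the blocks in `S`, `Pcᵀ E G E Pc = σx² (Pcᵀ E Pc)² + σn² Pcᵀ E Pc` and `Pcᵀ E Pc = ∑_{i ∈ S} Pᵢ`.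
-/

namespace Matrix

section CommRing

variable {R : Type*} [CommRing R] {ι m n : Type*} [Fintype ι] [Fintype m]

theorem transpose_mul_eq_sum_of_blocks {B C : Matrix (ι × m) n R} {P Q : ι → Matrix m n R}
    (hB : ∀ i k j, B (i, k) j = P i k j) (hC : ∀ i k j, C (i, k) j = Q i k j) :
    Bᵀ * C = ∑ i, (P i)ᵀ * Q i := by
  ext j l
  simp only [mul_apply, Fintype.sum_prod_type, sum_apply, transpose_apply, hB, hC]

variable [DecidableEq ι] [DecidableEq m]

def erasureMatrix (S : Finset ι) : Matrix (ι × m) (ι × m) R :=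
  diagonal fun p => if p.1 ∈ S then 1 else 0

theorem erasureMatrix_mul_self (S : Finset ι) :
    (erasureMatrix S * erasureMatrix S : Matrix (ι × m) (ι × m) R) = erasureMatrix S := by
  rw [erasureMatrix, diagonal_mul_diagonal]
  congr 1
  ext p
  split_ifs <;> simp

theorem transpose_mul_erasureMatrix_mul {B : Matrix (ι × m) n R} {P : ι → Matrix m n R}
    (hB : ∀ i k j, B (i, k) j = P i k j) (S : Finset ι) :
    Bᵀ * (erasureMatrix S : Matrix (ι × m) (ι × m) R) * B = ∑ i ∈ S, (P i)ᵀ * P i := by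
  have hEB : ∀ i k j, ((erasureMatrix S : Matrix (ι × m) (ι × m) R) * B) (i, k) j =
      (if i ∈ S then P i else 0) k j := by
    intro i k j
    by_cases hi : i ∈ S <;> simp [erasureMatrix, hB, hi]
  rw [Matrix.mul_assoc, transpose_mul_eq_sum_of_blocks hB hEB]
  rw [← Finset.sum_subset (Finset.subset_univ S) fun i _ hi => by simp [hi]]
  exact Finset.sum_congr rfl fun i hi => by simp [hi]

variable [Fintype n]

theorem transpose_mul_mul_regularizedGram_mul_mul {B : Matrix m n R} {E : Matrix m m R}
    (hE : E * E = E) (s t : R) :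
    Bᵀ * E * (s • (B * Bᵀ) + t • 1) * E * B =
      s • ((Bᵀ * E * B) * (Bᵀ * E * B)) + t • (Bᵀ * E * B) := by
  simp only [Matrix.mul_add, Matrix.add_mul, Matrix.mul_smul, Matrix.smul_mul, Matrix.mul_one,
    Matrix.mul_assoc, hE]

variable [DecidableEq n]

theorem regularizedGram_mul_of_transpose_mul_self {B : Matrix m n R} {a : R}
    (hB : Bᵀ * B = a • 1) (s t : R) :
    (s • (B * Bᵀ) + t • 1) * B = (a * s + t) • B := by
  rw [Matrix.add_mul, Matrix.smul_mul, Matrix.mul_assoc, hB, Matrix.mul_smul, Matrix.mul_one,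
    Matrix.smul_mul, Matrix.one_mul, smul_smul, add_smul, mul_comm]

theorem transpose_mul_regularizedGram_of_transpose_mul_self {B : Matrix m n R} {a : R}
    (hB : Bᵀ * B = a • 1) (s t : R) :
    Bᵀ * (s • (B * Bᵀ) + t • 1) = (a * s + t) • Bᵀ := by
  rw [Matrix.mul_add, Matrix.mul_smul, ← Matrix.mul_assoc, hB, Matrix.smul_mul, Matrix.one_mul,
    Matrix.mul_smul, Matrix.mul_one, smul_smul, add_smul, mul_comm]

end CommRing

section Field

variable {K : Type*} [Field K] {m n : Type*} [Fintype m] [DecidableEq m]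

theorem nonsing_inv_mul_eq_smul {G : Matrix m m K} {B : Matrix m n K} {c : K}
    (hG : IsUnit G) (hc : c ≠ 0) (h : G * B = c • B) : G⁻¹ * B = c⁻¹ • B :=
  calc G⁻¹ * B = c⁻¹ • (G⁻¹ * (c • B)) := by
        rw [Matrix.mul_smul, smul_smul, inv_mul_cancel₀ hc, one_smul]
    _ = c⁻¹ • B := by
        rw [← h, nonsing_inv_mul_cancel_left G B ((isUnit_iff_isUnit_det G).mp hG)]

theorem mul_nonsing_inv_eq_smul {G : Matrix m m K} {B : Matrix n m K} {c : K}
    (hG : IsUnit G) (hc : c ≠ 0) (h : B * G = c • B) : B * G⁻¹ = c⁻¹ • B :=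
  calc B * G⁻¹ = c⁻¹ • ((c • B) * G⁻¹) := by
        rw [Matrix.smul_mul, smul_smul, inv_mul_cancel₀ hc, one_smul]
    _ = c⁻¹ • B := by
        rw [← h, mul_nonsing_inv_cancel_right G B ((isUnit_iff_isUnit_det G).mp hG)]

end Field

theorem posDef_regularizedGram {m n : Type*} [Fintype m] [Fintype n] [DecidableEq m]
    (B : Matrix m n ℝ) {s t : ℝ} (hs : 0 ≤ s) (ht : 0 < t) :
    (s • (B * Bᵀ) + t • 1).PosDef := by
  have hgram : (B * Bᵀ).PosSemidef := by
    simpa [conjTranspose_eq_transpose_of_trivial] using posSemidef_self_mul_conjTranspose B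
  exact PosDef.posSemidef_add (hgram.smul hs) (PosDef.one.smul ht)

end Matrix

theorem erasure_extra_mse_general {M N : ℕ} (A : ℝ) (hA : 0 < A)
    (σx σn : ℝ) (hσn : 0 < σn)
    (P : Fin N → Matrix (Fin M) (Fin M) ℝ)
    (hP : ∀ i, (P i).IsSymm ∧ P i * P i = P i)
    (htight : ∑ i, P i = A • (1 : Matrix (Fin M) (Fin M) ℝ))
    (Pc : Matrix (Fin N × Fin M) (Fin M) ℝ)
    (hPc : ∀ (i : Fin N) (k j : Fin M), Pc (i, k) j = P i k j)
    (S : Finset (Fin N))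
    (E : Matrix (Fin N × Fin M) (Fin N × Fin M) ℝ)
    (hE : ∀ p q : Fin N × Fin M,
      E p q = if p.1 = q.1 ∧ p.2 = q.2 ∧ p.1 ∈ S then 1 else 0)
    (α : ℝ) (hα : α = σx ^ 2 / (A * σx ^ 2 + σn ^ 2)) :
    σx ^ 4 * Matrix.trace (Pcᵀ *
        (σx ^ 2 • (Pc * Pcᵀ) + σn ^ 2 • (1 : Matrix (Fin N × Fin M) (Fin N × Fin M) ℝ))⁻¹ *
        E *
        (σx ^ 2 • (Pc * Pcᵀ) + σn ^ 2 • (1 : Matrix (Fin N × Fin M) (Fin N × Fin M) ℝ)) *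
        E *
        (σx ^ 2 • (Pc * Pcᵀ) + σn ^ 2 • (1 : Matrix (Fin N × Fin M) (Fin N × Fin M) ℝ))⁻¹ *
        Pc) =
      α ^ 2 * Matrix.trace
        (σx ^ 2 • ((∑ i ∈ S, P i) * (∑ i ∈ S, P i)) + σn ^ 2 • ∑ i ∈ S, P i) := by
  have hproj : ∀ i, (P i)ᵀ * P i = P i := fun i => by rw [(hP i).1.eq, (hP i).2]
  have hgram : Pcᵀ * Pc = A • 1 := by
    rw [transpose_mul_eq_sum_of_blocks hPc hPc, ← htight]
    exact Finset.sum_congr rfl fun i _ => hproj i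
  have hE' : E = erasureMatrix S := by
    ext p q
    simp only [hE, erasureMatrix, diagonal_apply, ← and_assoc, ← Prod.ext_iff, ite_and]
  have herased : Pcᵀ * E * Pc = ∑ i ∈ S, P i := by
    rw [hE', transpose_mul_erasureMatrix_mul hPc]
    exact Finset.sum_congr rfl fun i _ => hproj i
  set G := σx ^ 2 • (Pc * Pcᵀ) + σn ^ 2 • (1 : Matrix (Fin N × Fin M) (Fin N × Fin M) ℝ)
  have hc : A * σx ^ 2 + σn ^ 2 ≠ 0 := by positivity
  have hG : IsUnit G := (posDef_regularizedGram Pc (sq_nonneg σx) (by positivity)).isUnit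
  have hGinvPc :=
    nonsing_inv_mul_eq_smul hG hc (regularizedGram_mul_of_transpose_mul_self hgram _ _)
  have hPcGinv :=
    mul_nonsing_inv_eq_smul hG hc (transpose_mul_regularizedGram_of_transpose_mul_self hgram _ _)
  have hmid := transpose_mul_mul_regularizedGram_mul_mul (B := Pc)
    (hE' ▸ erasureMatrix_mul_self S) (σx ^ 2) (σn ^ 2)
  calc σx ^ 4 * trace (Pcᵀ * G⁻¹ * E * G * E * G⁻¹ * Pc)
      = σx ^ 4 * trace (((A * σx ^ 2 + σn ^ 2)⁻¹ * (A * σx ^ 2 + σn ^ 2)⁻¹) •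
          (Pcᵀ * E * G * E * Pc)) := by
        rw [Matrix.mul_assoc _ G⁻¹ Pc, hGinvPc, hPcGinv]
        simp only [Matrix.smul_mul, Matrix.mul_smul, smul_smul]
    _ = _ := by
        rw [hmid, herased, trace_smul, smul_eq_mul, hα]
        ring

/-- For a tight fusion frame (`∑ᵢ Pᵢ = A • I`), `σₓ, σₙ > 0`,
composite stacked matrix `Pc`, an erasure set `S ⊆ {1,…,N}` and the corresponding
block-diagonal erasure matrix `E`, the extra MSE satisfies
`tr[σₓ⁴ Pcᵀ (σₓ² Pc Pcᵀ + σₙ² I)⁻¹ E (σₓ² Pc Pcᵀ + σₙ² I) E (σₓ² Pc Pcᵀ + σₙ² I)⁻¹ Pc]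
  = α² tr[σₓ² (∑_{i∈S} Pᵢ)² + σₙ² ∑_{i∈S} Pᵢ]`, where `α = σₓ²/(A σₓ² + σₙ²)`. -/
theorem erasure_extra_mse {M N : ℕ} (A : ℝ) (hA : 0 < A)
    (σx σn : ℝ) (hσx : 0 < σx) (hσn : 0 < σn)
    (P : Fin N → Matrix (Fin M) (Fin M) ℝ)
    (hP : ∀ i, (P i).IsSymm ∧ P i * P i = P i)
    (htight : ∑ i, P i = A • (1 : Matrix (Fin M) (Fin M) ℝ))
    (Pc : Matrix (Fin N × Fin M) (Fin M) ℝ)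
    (hPc : ∀ (i : Fin N) (k j : Fin M), Pc (i, k) j = P i k j)
    (S : Finset (Fin N))
    (E : Matrix (Fin N × Fin M) (Fin N × Fin M) ℝ)
    (hE : ∀ p q : Fin N × Fin M,
      E p q = if p.1 = q.1 ∧ p.2 = q.2 ∧ p.1 ∈ S then 1 else 0)
    (α : ℝ) (hα : α = σx ^ 2 / (A * σx ^ 2 + σn ^ 2)) :
    σx ^ 4 * Matrix.trace (Pcᵀ *
        (σx ^ 2 • (Pc * Pcᵀ) + σn ^ 2 • (1 : Matrix (Fin N × Fin M) (Fin N × Fin M) ℝ))⁻¹ *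
        E *
        (σx ^ 2 • (Pc * Pcᵀ) + σn ^ 2 • (1 : Matrix (Fin N × Fin M) (Fin N × Fin M) ℝ)) *
        E *
        (σx ^ 2 • (Pc * Pcᵀ) + σn ^ 2 • (1 : Matrix (Fin N × Fin M) (Fin N × Fin M) ℝ))⁻¹ *
        Pc) =
      α ^ 2 * Matrix.trace
        (σx ^ 2 • ((∑ i ∈ S, P i) * (∑ i ∈ S, P i)) + σn ^ 2 • ∑ i ∈ S, P i) :=
  erasure_extra_mse_general A hA σx σn hσn P hP htight Pc hPc S E hE α hα
end

section
/- Fix integers M, N ≥ 1 and σ_x, σ_n > 0, and define MSE : (0,∞) → ℝ by MSE(m) = M σ_x² σ_n² / (N m σ_x²/M + σ_n²) + σ_x⁴ (σ_x² + σ_n²) m / (N m σ_x²/M + σ_n²)². Then there exists m̃ ≥ 0 such that MSE is monotonically increasing on (0, m̃] and monotonically decreasing on [m̃, ∞). Consequently, for any 0 < m_min ≤ m_max, the minimum of MSE over the interval [m_min, m_max] is attained at an endpoint: at m_min if MSE(m_min) ≤ MSE(m_max), and at m_max otherwise. -/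
/-!
Substituting `u = c m + s` turns `A / u + B m / u²` into `P / u - Q / u²` with `P = A + B / c` and
`Q = B s / c`. The difference quotient of `P / u - Q / u²` has the sign of `Q (u + v) - P u v`,
so it increases up to `u = 2 Q / P` and decreases afterwards. A function that increases and then
decreases attains its minimum over an interval at an endpoint.
-/

open Set

section DivSubDivSq

variable (P Q : ℝ)

lemma div_sub_div_sq_sub_div_sub_div_sq {u v : ℝ} (hu : u ≠ 0) (hv : v ≠ 0) :
    (P / v - Q / v ^ 2) - (P / u - Q / u ^ 2) =
      (v - u) * (Q * (u + v) - P * u * v) / (u ^ 2 * v ^ 2) := by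
  field_simp
  ring

variable {P Q}

lemma monotoneOn_div_sub_div_sq (hP : 0 < P) (hQ : 0 ≤ Q) :
    MonotoneOn (fun u : ℝ => P / u - Q / u ^ 2) (Ioc 0 (2 * Q / P)) := by
  intro u hu v hv huv
  have hPv : v * P ≤ 2 * Q := (le_div_iff₀ hP).mp hv.2
  rw [← sub_nonneg, div_sub_div_sq_sub_div_sub_div_sq P Q hu.1.ne' (hu.1.trans_le huv).ne']
  refine div_nonneg (mul_nonneg (sub_nonneg.mpr huv) ?_) (by positivity)
  nlinarith [mul_le_mul_of_nonneg_left hPv hu.1.le, mul_le_mul_of_nonneg_left huv hQ]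

lemma antitoneOn_div_sub_div_sq (hP : 0 < P) (hQ : 0 < Q) :
    AntitoneOn (fun u : ℝ => P / u - Q / u ^ 2) (Ici (2 * Q / P)) := by
  intro u hu v hv huv
  have hPu : 2 * Q ≤ u * P := (div_le_iff₀ hP).mp hu
  have hu0 : 0 < u := (by positivity : 0 < 2 * Q / P).trans_le hu
  have hv0 : 0 < v := hu0.trans_le huv
  rw [← sub_nonneg, ← neg_sub, neg_nonneg]
  dsimp only
  rw [div_sub_div_sq_sub_div_sub_div_sq P Q hu0.ne' hv0.ne']
  refine div_nonpos_of_nonpos_of_nonneg (mul_nonpos_of_nonneg_of_nonpos (sub_nonneg.mpr huv) ?_)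
    (by positivity)
  nlinarith [mul_le_mul_of_nonneg_left hPu hv0.le, mul_le_mul_of_nonneg_left huv hQ.le]

end DivSubDivSq

lemma exists_monotoneOn_Ioc_antitoneOn_Ici_div_add_mul_div_sq {A B c s : ℝ} (hA : 0 ≤ A)
    (hB : 0 < B) (hc : 0 < c) (hs : 0 < s) :
    ∃ t : ℝ, 0 ≤ t ∧
      MonotoneOn (fun m => A / (c * m + s) + B * m / (c * m + s) ^ 2) (Ioc 0 t) ∧
      AntitoneOn (fun m => A / (c * m + s) + B * m / (c * m + s) ^ 2) (Ici t) := by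
  set P := A + B / c
  set Q := B * s / c
  have hP : 0 < P := by positivity
  have hQ : 0 < Q := by positivity
  have h_eq : EqOn ((fun u : ℝ => P / u - Q / u ^ 2) ∘ fun m => c * m + s)
      (fun m => A / (c * m + s) + B * m / (c * m + s) ^ 2) (Ici 0) := by
    intro m hm
    have : c * m + s ≠ 0 := by have : (0 : ℝ) ≤ m := hm; positivity
    simp only [Function.comp_apply, P, Q]
    field_simp
    ring
  have h_affine : Monotone fun m : ℝ => c * m + s := fun x y hxy => by dsimp only; gcongr
  -- the turning point `2 Q / P` of `P / u - Q / u²`, pulled back through `u = c m + s`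
  refine ⟨max 0 ((2 * Q / P - s) / c), le_max_left _ _, ?_, ?_⟩
  · refine ((monotoneOn_div_sub_div_sq hP hQ.le).comp (h_affine.monotoneOn _) fun m hm => ?_).congr
      (h_eq.mono (Ioc_subset_Ioi_self.trans Ioi_subset_Ici_self))
    have hm' : m ≤ (2 * Q / P - s) / c := (le_max_iff.mp hm.2).resolve_left hm.1.not_ge
    have := (le_div_iff₀ hc).mp hm'
    exact ⟨by nlinarith [hm.1], by linarith⟩
  · refine ((antitoneOn_div_sub_div_sq hP hQ).comp_MonotoneOn (h_affine.monotoneOn _)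
      fun m hm => ?_).congr (h_eq.mono (Ici_subset_Ici.mpr (le_max_left _ _)))
    have := (div_le_iff₀ hc).mp ((le_max_right _ _).trans (show _ ≤ m from hm))
    exact show 2 * Q / P ≤ c * m + s by linarith

lemma min_le_of_monotoneOn_Ioc_of_antitoneOn_Ici {α β : Type*} [LinearOrder α] [LinearOrder β]
    {f : α → β} {l t a b m : α} (hmono : MonotoneOn f (Ioc l t)) (hanti : AntitoneOn f (Ici t))
    (hl : l < a) (hm : m ∈ Icc a b) : min (f a) (f b) ≤ f m := by
  rcases le_total m t with h | h
  · exact (min_le_left _ _).trans (hmono ⟨hl, hm.1.trans h⟩ ⟨hl.trans_le hm.1, h⟩ hm.1)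
  · exact (min_le_right _ _).trans (hanti h (h.trans hm.2) hm.2)

/-- Fix integers `M, N ≥ 1` and `σₓ, σₙ > 0`, and consider
`MSE(m) = M σₓ² σₙ² / (N m σₓ²/M + σₙ²) + σₓ⁴ (σₓ² + σₙ²) m / (N m σₓ²/M + σₙ²)²`
for `m > 0`.  Then there is `m̃ ≥ 0` such that `MSE` is monotonically increasing on
`(0, m̃]` and monotonically decreasing on `[m̃, ∞)`.  Consequently, for any
`0 < m_min ≤ m_max`, the minimum of `MSE` over `[m_min, m_max]` is attained at an
endpoint: at `m_min` if `MSE(m_min) ≤ MSE(m_max)`, and at `m_max` otherwise. -/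
theorem one_erasure_mse_unimodal (M N : ℕ) (hM : 1 ≤ M) (hN : 1 ≤ N)
    (σx σn : ℝ) (hσx : 0 < σx) (hσn : 0 < σn)
    (f : ℝ → ℝ)
    (hf : ∀ m : ℝ, f m =
      (M : ℝ) * σx ^ 2 * σn ^ 2 / ((N : ℝ) * m * σx ^ 2 / (M : ℝ) + σn ^ 2) +
        σx ^ 4 * (σx ^ 2 + σn ^ 2) * m /
          ((N : ℝ) * m * σx ^ 2 / (M : ℝ) + σn ^ 2) ^ 2) :
    (∃ mt : ℝ, 0 ≤ mt ∧ MonotoneOn f (Set.Ioc 0 mt) ∧ AntitoneOn f (Set.Ici mt)) ∧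
    ∀ mmin mmax : ℝ, 0 < mmin → mmin ≤ mmax →
      ((f mmin ≤ f mmax → ∀ m ∈ Set.Icc mmin mmax, f mmin ≤ f m) ∧
        (f mmax < f mmin → ∀ m ∈ Set.Icc mmin mmax, f mmax ≤ f m)) := by
  have hM0 : (0 : ℝ) < M := Nat.cast_pos.mpr hM
  have hN0 : (0 : ℝ) < N := Nat.cast_pos.mpr hN
  have hf_affine : f = fun m => M * σx ^ 2 * σn ^ 2 / (N * σx ^ 2 / M * m + σn ^ 2) +
      σx ^ 4 * (σx ^ 2 + σn ^ 2) * m / (N * σx ^ 2 / M * m + σn ^ 2) ^ 2 := by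
    funext m
    rw [hf]
    ring
  obtain ⟨t, ht, hmono, hanti⟩ := exists_monotoneOn_Ioc_antitoneOn_Ici_div_add_mul_div_sq
    (by positivity : (0 : ℝ) ≤ M * σx ^ 2 * σn ^ 2)
    (by positivity : 0 < σx ^ 4 * (σx ^ 2 + σn ^ 2)) (by positivity : 0 < N * σx ^ 2 / M)
    (by positivity : 0 < σn ^ 2)
  rw [← hf_affine] at hmono hanti
  refine ⟨⟨t, ht, hmono, hanti⟩, fun a b ha _ =>
    ⟨fun hab m hm => ?_, fun hba m hm => ?_⟩⟩
  · exact min_eq_left hab ▸ min_le_of_monotoneOn_Ioc_of_antitoneOn_Ici hmono hanti ha hm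
  · exact min_eq_right hba.le ▸ min_le_of_monotoneOn_Ioc_of_antitoneOn_Ici hmono hanti ha hm
end

section
/- Let {W_i}_{i=1}^N be a tight fusion frame for ℝ^M with Σ_{ℓ=1}^N P_ℓ = A·I in which every subspace has dimension m and all pairwise chordal distances are equal to a common value d_c, and let σ_x, σ_n > 0. Then for any erasure set S ⊆ {1,…,N} with |S| = k, the extra MSE of the no-erasure LMMSE estimator equals α² (σ_x² + σ_n²) k m + α² σ_x² k (k−1) (m − d_c²), where α = σ_x²/(A σ_x² + σ_n²). In particular, for fixed m and k it is a strictly decreasing function of d_c. -/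
open Matrix BigOperators

/-- The Frobenius norm of a real square matrix. -/
noncomputable def frobeniusNorm {M : ℕ} (X : Matrix (Fin M) (Fin M) ℝ) : ℝ :=
  Real.sqrt (Matrix.trace (Xᵀ * X))

/-- The chordal distance between two subspaces of `ℝ^M`, expressed in terms of their
orthogonal projection matrices: `d_c = (1/√2) ‖Q_V − Q_W‖_F`. -/
noncomputable def chordalDist {M : ℕ} (Q₁ Q₂ : Matrix (Fin M) (Fin M) ℝ) : ℝ :=
  (1 / Real.sqrt 2) * frobeniusNorm (Q₁ - Q₂)

/-! An orthogonal projection onto an `m`-dimensional subspace has trace `m`, and expanding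
`‖P_i − P_j‖_F²` shows `tr (P_i P_j) = m − d_c²` for `i ≠ j`. Expanding `(∑_{i ∈ S} P_i)²` into
`k` diagonal and `k (k − 1)` off-diagonal products then evaluates both traces in the extra MSE,
which is thus affine in `d_c²` with slope `−α² σ_x² k (k − 1) < 0` once `k ≥ 2`. -/

theorem Matrix.trace_eq_finrank_range_of_isIdempotentElem_s11 {K n : Type*} [Field K] [Fintype n]
    [DecidableEq n] {P : Matrix n n K} (hP : IsIdempotentElem P) :
    P.trace = Module.finrank K (LinearMap.range P.mulVecLin) := by
  rw [← Matrix.trace_toLin'_eq]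
  exact (LinearMap.IsIdempotentElem.isProj_range _ (hP.map toLinAlgEquiv')).trace

theorem frobeniusNorm_sq {M : ℕ} (X : Matrix (Fin M) (Fin M) ℝ) :
    frobeniusNorm X ^ 2 = trace (Xᵀ * X) := by
  have h := (posSemidef_conjTranspose_mul_self X).trace_nonneg
  rw [conjTranspose_eq_transpose_of_trivial] at h
  exact Real.sq_sqrt h

theorem chordalDist_sq {M : ℕ} {P Q : Matrix (Fin M) (Fin M) ℝ} (hPs : P.IsSymm)
    (hQs : Q.IsSymm) (hP : IsIdempotentElem P) (hQ : IsIdempotentElem Q) :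
    chordalDist P Q ^ 2 = (trace P + trace Q) / 2 - trace (P * Q) := by
  have hexpand : (P - Q)ᵀ * (P - Q) = P * P - P * Q - Q * P + Q * Q := by
    rw [transpose_sub, hPs.eq, hQs.eq]
    noncomm_ring
  rw [chordalDist, mul_pow, frobeniusNorm_sq, hexpand, hP.eq, hQ.eq, trace_add, trace_sub,
    trace_sub, trace_mul_comm Q P, div_pow, Real.sq_sqrt zero_le_two]
  ring

theorem Matrix.trace_sum_mul_sum {ι n R : Type*} [DecidableEq ι] [Fintype n] [CommRing R]
    (S : Finset ι) (P : ι → Matrix n n R) {a b : R}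
    (hdiag : ∀ i ∈ S, trace (P i * P i) = a)
    (hoff : ∀ i ∈ S, ∀ j ∈ S, i ≠ j → trace (P i * P j) = b) :
    trace ((∑ i ∈ S, P i) * (∑ i ∈ S, P i)) =
      (S.card : R) * a + (S.card : R) * ((S.card : R) - 1) * b := by
  have hrow : ∀ i ∈ S, ∑ j ∈ S, trace (P i * P j) = a + ((S.card : R) - 1) * b := by
    intro i hi
    rw [← Finset.add_sum_erase _ _ hi, hdiag i hi,
      Finset.sum_congr rfl fun j hj => hoff i hi j (Finset.mem_of_mem_erase hj)
        (Finset.ne_of_mem_erase hj).symm,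
      Finset.sum_const, Finset.card_erase_of_mem hi, nsmul_eq_mul,
      Nat.cast_sub (Finset.card_pos.mpr ⟨i, hi⟩), Nat.cast_one]
  simp_rw [Finset.sum_mul_sum, trace_sum]
  rw [Finset.sum_congr rfl hrow, Finset.sum_const, nsmul_eq_mul]
  ring

theorem strictAntiOn_add_mul_sub_sq (K c m : ℝ) (hc : 0 < c) :
    StrictAntiOn (fun d : ℝ => K + c * (m - d ^ 2)) (Set.Ici 0) := by
  intro a ha b _ hab
  have : a ^ 2 < b ^ 2 := pow_lt_pow_left₀ hab ha two_ne_zero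
  dsimp only
  gcongr

theorem k_erasure_mse_general {M N : ℕ} (A : ℝ) (hA : 0 < A)
    (σx σn : ℝ) (hσx : 0 < σx)
    (W : Fin N → Submodule ℝ (Fin M → ℝ))
    (P : Fin N → Matrix (Fin M) (Fin M) ℝ)
    (hP : ∀ i, (P i).IsSymm ∧ P i * P i = P i ∧
      LinearMap.range (P i).mulVecLin = W i)
    (m : ℕ) (hdim : ∀ i, Module.finrank ℝ (W i) = m)
    (dc : ℝ) (hdc : ∀ i j, i ≠ j → chordalDist (P i) (P j) = dc)
    (S : Finset (Fin N))
    (α : ℝ) (hα : α = σx ^ 2 / (A * σx ^ 2 + σn ^ 2)) :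
    α ^ 2 * Matrix.trace
        (σx ^ 2 • ((∑ i ∈ S, P i) * (∑ i ∈ S, P i)) + σn ^ 2 • ∑ i ∈ S, P i) =
      α ^ 2 * (σx ^ 2 + σn ^ 2) * (S.card : ℝ) * (m : ℝ) +
        α ^ 2 * σx ^ 2 * (S.card : ℝ) * ((S.card : ℝ) - 1) * ((m : ℝ) - dc ^ 2) ∧
    (2 ≤ S.card →
      StrictAntiOn
        (fun d : ℝ => α ^ 2 * (σx ^ 2 + σn ^ 2) * (S.card : ℝ) * (m : ℝ) +
          α ^ 2 * σx ^ 2 * (S.card : ℝ) * ((S.card : ℝ) - 1) * ((m : ℝ) - d ^ 2))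
        (Set.Ici 0)) := by
  have htrace : ∀ i, trace (P i) = m := fun i => by
    rw [trace_eq_finrank_range_of_isIdempotentElem_s11 (hP i).2.1, (hP i).2.2, hdim i]
  have hcross : ∀ i j, i ≠ j → trace (P i * P j) = m - dc ^ 2 := fun i j hij => by
    have h := chordalDist_sq (hP i).1 (hP j).1 (hP i).2.1 (hP j).2.1
    rw [hdc i j hij, htrace i, htrace j] at h
    linarith
  have hsum : trace (∑ i ∈ S, P i) = S.card * m := by
    simp only [trace_sum, htrace, Finset.sum_const, nsmul_eq_mul]
  have hgram := trace_sum_mul_sum S P (fun i _ => by rw [(hP i).2.1, htrace i])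
    fun i _ j _ hij => hcross i j hij
  refine ⟨?_, fun hk => strictAntiOn_add_mul_sub_sq _ _ _ ?_⟩
  · rw [trace_add, trace_smul, trace_smul, hgram, hsum, smul_eq_mul, smul_eq_mul]
    ring
  · have hk' : (2 : ℝ) ≤ S.card := by exact_mod_cast hk
    have : (0 : ℝ) < S.card - 1 := by linarith
    have : 0 < α := by rw [hα]; positivity
    positivity

/-- For a tight fusion frame `∑ₗ Pₗ = A • I` of `m`-dimensional
subspaces whose pairwise chordal distances are all equal to `d_c`, and `σₓ, σₙ > 0`:
for any erasure set `S` with `|S| = k`, the extra MSE of the no-erasure LMMSE estimator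
equals `α²(σₓ²+σₙ²)km + α²σₓ²k(k−1)(m − d_c²)`, where `α = σₓ²/(Aσₓ²+σₙ²)`.
In particular, for fixed `m` and `k ≥ 2` it is a strictly decreasing function
of `d_c`. -/
theorem k_erasure_mse {M N : ℕ} (A : ℝ) (hA : 0 < A)
    (σx σn : ℝ) (hσx : 0 < σx) (hσn : 0 < σn)
    (W : Fin N → Submodule ℝ (Fin M → ℝ))
    (P : Fin N → Matrix (Fin M) (Fin M) ℝ)
    (hP : ∀ i, (P i).IsSymm ∧ P i * P i = P i ∧
      LinearMap.range (P i).mulVecLin = W i)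
    (htight : ∑ ℓ, P ℓ = A • (1 : Matrix (Fin M) (Fin M) ℝ))
    (m : ℕ) (hdim : ∀ i, Module.finrank ℝ (W i) = m)
    (dc : ℝ) (hdc : ∀ i j, i ≠ j → chordalDist (P i) (P j) = dc)
    (S : Finset (Fin N))
    (α : ℝ) (hα : α = σx ^ 2 / (A * σx ^ 2 + σn ^ 2)) :
    α ^ 2 * Matrix.trace
        (σx ^ 2 • ((∑ i ∈ S, P i) * (∑ i ∈ S, P i)) + σn ^ 2 • ∑ i ∈ S, P i) =
      α ^ 2 * (σx ^ 2 + σn ^ 2) * (S.card : ℝ) * (m : ℝ) +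
        α ^ 2 * σx ^ 2 * (S.card : ℝ) * ((S.card : ℝ) - 1) * ((m : ℝ) - dc ^ 2) ∧
    (2 ≤ S.card →
      StrictAntiOn
        (fun d : ℝ => α ^ 2 * (σx ^ 2 + σn ^ 2) * (S.card : ℝ) * (m : ℝ) +
          α ^ 2 * σx ^ 2 * (S.card : ℝ) * ((S.card : ℝ) - 1) * ((m : ℝ) - d ^ 2))
        (Set.Ici 0)) :=
  k_erasure_mse_general A hA σx σn hσx W P hP m hdim dc hdc S α hα
end

section
/- Let N ≥ 2 and let W_1,…,W_N be m-dimensional subspaces of ℝ^M whose pairwise chordal distances are all equal to the simplex bound, i.e. d_c(W_i,W_j)² = (m(M−m)/M) · (N/(N−1)) for all i ≠ j. Then {W_i}_{i=1}^N is a tight fusion frame for ℝ^M: Σ_{i=1}^N P_i = (Nm/M)·I, where P_i is the orthogonal projection onto W_i. -/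
/-!
With `S = ∑ Pᵢ` and `c = Nm/M`, the squared Frobenius norm of the symmetric matrix `S - c • 1` is
`tr (S²) - 2c tr S + c² M`. Here `tr S = Nm` because each `Pᵢ` is a projection of rank `m`, and
`tr (S²) = Nm + N(N-1) tr (Pᵢ Pⱼ)`, where the chordal distance fixes
`tr (Pᵢ Pⱼ) = m - d_c(Wᵢ, Wⱼ)²` for `i ≠ j`. At the simplex bound this norm is exactly `0`.
-/

open Matrix BigOperators

namespace Matrix

variable {n ι R : Type*}

theorem isSymm_sum [AddCommMonoid R] {s : Finset ι} {A : ι → Matrix n n R}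
    (h : ∀ i ∈ s, (A i).IsSymm) : (∑ i ∈ s, A i).IsSymm := by
  rw [IsSymm, transpose_sum]
  exact Finset.sum_congr rfl fun i hi => h i hi

variable [Fintype n]

theorem trace_eq_finrank_range_of_isIdempotentElem_s16 [DecidableEq n] [Field R] {A : Matrix n n R}
    (hA : IsIdempotentElem A) : A.trace = Module.finrank R (LinearMap.range A.mulVecLin) := by
  rw [← trace_toLin'_eq, toLin'_apply']
  exact (LinearMap.IsIdempotentElem.isProj_range _ (hA.map toLinAlgEquiv')).trace

theorem trace_sum_mul_sum_of_pairwise [Fintype ι] [CommRing R] (P : ι → Matrix n n R)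
    {a t : R} (hdiag : ∀ i, trace (P i * P i) = a)
    (hoff : ∀ i j, i ≠ j → trace (P i * P j) = t) :
    trace ((∑ i, P i) * ∑ i, P i) =
      Fintype.card ι * a + Fintype.card ι * (Fintype.card ι - 1) * t := by
  classical
  have hrow : ∀ i, ∑ j, trace (P i * P j) = a + (Fintype.card ι - 1) * t := by
    intro i
    rw [← Finset.add_sum_erase _ _ (Finset.mem_univ i), hdiag,
      Finset.sum_congr rfl fun j hj => hoff i j (Finset.ne_of_mem_erase hj).symm,
      Finset.sum_const, Finset.card_erase_of_mem (Finset.mem_univ i), nsmul_eq_mul,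
      Finset.card_univ, Nat.cast_pred (Fintype.card_pos_iff.mpr ⟨i⟩)]
  simp only [Finset.sum_mul_sum, trace_sum, hrow, Finset.sum_const, Finset.card_univ,
    nsmul_eq_mul]
  ring

theorem trace_mul_self_sub_smul_one [DecidableEq n] [CommRing R] (S : Matrix n n R) (c : R) :
    trace ((S - c • 1) * (S - c • 1)) =
      trace (S * S) - 2 * c * trace S + c ^ 2 * Fintype.card n := by
  simp only [sub_mul, mul_sub, smul_mul, Matrix.mul_smul, one_mul, mul_one, trace_sub, trace_smul,
    trace_one, smul_eq_mul]
  ring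

theorem eq_zero_of_isSymm_of_trace_mul_self_eq_zero {A : Matrix n n ℝ} (hA : A.IsSymm)
    (h : trace (A * A) = 0) : A = 0 := by
  rw [← trace_conjTranspose_mul_self_eq_zero_iff, conjTranspose_eq_transpose_of_trivial, hA.eq, h]

end Matrix

theorem chordalDist_sq_s16 {M : ℕ} (Q₁ Q₂ : Matrix (Fin M) (Fin M) ℝ) :
    chordalDist Q₁ Q₂ ^ 2 = trace ((Q₁ - Q₂)ᵀ * (Q₁ - Q₂)) / 2 := by
  have hnonneg : 0 ≤ trace ((Q₁ - Q₂)ᵀ * (Q₁ - Q₂)) := by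
    simpa using (posSemidef_conjTranspose_mul_self (Q₁ - Q₂)).trace_nonneg
  rw [chordalDist, frobeniusNorm, mul_pow, div_pow, one_pow, Real.sq_sqrt zero_le_two,
    Real.sq_sqrt hnonneg, one_div_mul_eq_div]

theorem chordalDist_sq_of_isSymm_of_isIdempotentElem {M : ℕ} {Q₁ Q₂ : Matrix (Fin M) (Fin M) ℝ}
    (hs₁ : Q₁.IsSymm) (hs₂ : Q₂.IsSymm) (hi₁ : IsIdempotentElem Q₁)
    (hi₂ : IsIdempotentElem Q₂) :
    chordalDist Q₁ Q₂ ^ 2 = (trace Q₁ + trace Q₂) / 2 - trace (Q₁ * Q₂) := by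
  rw [chordalDist_sq_s16, (hs₁.sub hs₂).eq, sub_mul, mul_sub, mul_sub, hi₁.eq, hi₂.eq]
  simp only [trace_sub]
  rw [trace_mul_comm Q₂ Q₁]
  ring

/-- Let `N ≥ 2` and let `W 1, …, W N` be `m`-dimensional subspaces of
`ℝ^M` whose pairwise squared chordal distances all equal the simplex bound
`(m(M−m)/M)(N/(N−1))`.  Then `{W i}` is a tight fusion frame:
`∑ᵢ Pᵢ = (Nm/M) • I`. -/
theorem simplex_bound_implies_tight {M N : ℕ} (hN : 2 ≤ N) (hM : 0 < M)
    (W : Fin N → Submodule ℝ (Fin M → ℝ))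
    (P : Fin N → Matrix (Fin M) (Fin M) ℝ)
    (hP : ∀ i, (P i).IsSymm ∧ P i * P i = P i ∧
      LinearMap.range (P i).mulVecLin = W i)
    (m : ℕ) (hdim : ∀ i, Module.finrank ℝ (W i) = m)
    (hdc : ∀ i j, i ≠ j →
      chordalDist (P i) (P j) ^ 2 =
        ((m : ℝ) * ((M : ℝ) - (m : ℝ)) / (M : ℝ)) * ((N : ℝ) / ((N : ℝ) - 1))) :
    ∑ i, P i = ((N : ℝ) * (m : ℝ) / (M : ℝ)) • (1 : Matrix (Fin M) (Fin M) ℝ) := by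
  have htr : ∀ i, trace (P i) = m := fun i => by
    rw [trace_eq_finrank_range_of_isIdempotentElem_s16 (hP i).2.1, (hP i).2.2, hdim]
  have hdiag : ∀ i, trace (P i * P i) = m := fun i => by rw [(hP i).2.1, htr]
  have hoff : ∀ i j, i ≠ j →
      trace (P i * P j) = m - m * (M - m) / M * (N / (N - 1)) := by
    intro i j hij
    have h := hdc i j hij
    rw [chordalDist_sq_of_isSymm_of_isIdempotentElem (hP i).1 (hP j).1 (hP i).2.1 (hP j).2.1,
      htr, htr] at h
    linarith
  have hsymm : (∑ i, P i - ((N : ℝ) * m / M) • (1 : Matrix (Fin M) (Fin M) ℝ)).IsSymm :=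
    (isSymm_sum fun i _ => (hP i).1).sub (isSymm_one.smul _)
  rw [← sub_eq_zero]
  refine eq_zero_of_isSymm_of_trace_mul_self_eq_zero hsymm ?_
  have hM' : (M : ℝ) ≠ 0 := by positivity
  have hN' : (N : ℝ) - 1 ≠ 0 := by
    have : (2 : ℝ) ≤ N := by exact_mod_cast hN
    linarith
  simp only [trace_mul_self_sub_smul_one, trace_sum_mul_sum_of_pairwise P hdiag hoff, trace_sum,
    htr, Finset.sum_const, Finset.card_univ, Fintype.card_fin, nsmul_eq_mul]
  field_simp
  ring
end
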